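/- Let n ≥ 1, let γ : ℝⁿ → ℝ be a nonnegative Schwartz function, let k := 𝓕γ, and let α ∈ ℕⁿ be a multi-index with |α| = α₁ + ⋯ + αₙ. Then for all Schwartz functions u, v : ℝⁿ → ℂ one has ∫_{ℝⁿ} ∫_{ℝⁿ} xᵅ · conj((𝓕u)(x)) · k(x − y) · yᵅ · (𝓕v)(y) dy dx = (2π)^{−2|α|} ∫_{ℝⁿ} γ(t) · conj((Dᵅu)(t)) · (Dᵅv)(t) dt, where xᵅ = x₁^{α₁}⋯xₙ^{αₙ} and Dᵅ = ∂^{|α|}/∂x₁^{α₁}⋯∂xₙ^{αₙ}. (This is the key identity in the proof that the kernel K(x,y) = Σᵢ e^{−ε²‖x−y‖²} fᵢ*(x)fᵢ(y) with polynomial fᵢ is PDO-based: multiplication by a monomial on the Fourier side is conjugated into the differential operator Dᵅ.) -/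

import Mathlib

open MeasureTheory Complex SchwartzMap
open scoped FourierTransform RealInnerProductSpace ENNReal

noncomputable abbrev Euc (n : ℕ) := EuclideanSpace ℝ (Fin n)

/-- The iterated partial derivative `Dᵅ = ∂^{|α|}/∂x₁^{α₁}⋯∂xₙ^{αₙ}` on Schwartz space,
obtained by applying, for each coordinate `i`, the partial derivative in the direction of the
`i`-th standard basis vector `α i` times. -/
noncomputable def Dpow {n : ℕ} (α : Fin n → ℕ) (u : SchwartzMap (Euc n) ℂ) :
    SchwartzMap (Euc n) ℂ :=
  (List.finRange n).foldr
    (fun i f =>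
      (fun g => LineDeriv.lineDerivOpCLM ℂ (SchwartzMap (Euc n) ℂ) (EuclideanSpace.single i (1 : ℝ)) g)^[α i] f) u

variable {n : ℕ}

/-- real Schwartz as complex Schwartz -/
noncomputable def ofRealS (γ : SchwartzMap (Euc n) ℝ) : SchwartzMap (Euc n) ℂ where
  toFun x := (γ x : ℂ)
  smooth' := Complex.ofRealCLM.contDiff.comp (γ.smooth ⊤)
  decay' := by
    intro k m
    obtain ⟨C, hC⟩ := γ.decay' k m
    refine ⟨C, fun x => ?_⟩
    have h : (fun x : Euc n => ((γ x : ℝ) : ℂ)) = Complex.ofRealLI ∘ ⇑γ := rfl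
    rw [h, LinearIsometry.norm_iteratedFDeriv_comp_left _ _ le_rfl]
    exact hC x
    exact (γ.smooth _).contDiffAt

@[simp] lemma ofRealS_apply (γ : SchwartzMap (Euc n) ℝ) (x : Euc n) :
    ofRealS γ x = (γ x : ℂ) := rfl

/-- multiplication formula -/
lemma mul_flip {f g : Euc n → ℂ} (hf : Integrable f) (hg : Integrable g) :
    ∫ ξ : Euc n, 𝓕 f ξ * g ξ = ∫ x : Euc n, f x * 𝓕 g x := by
  have h := VectorFourier.integral_fourierIntegral_smul_eq_flip (L := innerₗ (Euc n))
    Real.continuous_fourierChar continuous_inner hf hg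
  simp only [flip_innerₗ, smul_eq_mul] at h; exact h

lemma schwartz_inv (f : SchwartzMap (Euc n) ℂ) : 𝓕⁻ (𝓕 ⇑f) = ⇑f := by
  have h : Integrable (𝓕 ⇑f) := by
    have : 𝓕 ⇑f = ⇑(SchwartzMap.fourierTransformCLM ℂ f) := rfl
    rw [this]; exact (SchwartzMap.fourierTransformCLM ℂ f).integrable
  exact Continuous.fourierInv_fourier_eq f.continuous f.integrable h

lemma conj_circle (r : ℝ) : (starRingEnd ℂ) (Real.fourierChar r : ℂ) = (Real.fourierChar (-r) : ℂ) := by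
  simp only [Real.fourierChar_apply, ← Complex.exp_conj, map_mul, Complex.conj_I,
    Complex.conj_ofReal, map_ofNat]
  congr 1
  push_cast
  ring

lemma fourier_conj (g : Euc n → ℂ) (t : Euc n) :
    𝓕 (fun x => (starRingEnd ℂ) (g x)) t = (starRingEnd ℂ) (𝓕⁻ g t) := by
  rw [Real.fourier_eq, Real.fourierInv_eq, ← integral_conj]
  congr 1
  ext x
  rw [Circle.smul_def, Circle.smul_def, smul_eq_mul, smul_eq_mul, map_mul, conj_circle]

lemma fourier_sub_left (w : Euc n → ℂ) (hw : Integrable w) (x t : Euc n) :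
    𝓕 (fun y => w (x - y)) t = (Real.fourierChar (-⟪x, t⟫) : ℂ) * 𝓕⁻ w t := by
  rw [Real.fourier_eq]
  have h : ∀ y : Euc n, (Real.fourierChar (-⟪y, t⟫) : ℂ) • w (x - y)
      = (fun z => (Real.fourierChar (-⟪x - z, t⟫) : ℂ) • w z) (x - y) := by
    intro y; simp [sub_sub_cancel]
  simp_rw [Circle.smul_def, smul_eq_mul] at h ⊢
  calc ∫ y : Euc n, (Real.fourierChar (-⟪y, t⟫) : ℂ) * w (x - y)
      = ∫ z : Euc n, (Real.fourierChar (-⟪x - z, t⟫) : ℂ) * w z := by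
        simp_rw [h]; exact integral_sub_left_eq_self (fun z : Euc n => ((Real.fourierChar (-⟪x - z, t⟫) : ℂ)) * w z) (μ := volume) x
    _ = ∫ z : Euc n, (Real.fourierChar (-⟪x, t⟫) : ℂ) * ((Real.fourierChar ⟪z, t⟫ : ℂ) * w z) := by
        congr 1; ext z
        rw [inner_sub_left, neg_sub, ← mul_assoc, ← Circle.coe_mul, ← AddChar.map_add_eq_mul]
        ring_nf
    _ = (Real.fourierChar (-⟪x, t⟫) : ℂ) * ∫ z : Euc n, (Real.fourierChar ⟪z, t⟫ : ℂ) * w z :=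
        integral_const_mul _ _
    _ = _ := by rw [Real.fourierInv_eq]; simp_rw [Circle.smul_def, smul_eq_mul]

lemma fourier_pderiv (f : SchwartzMap (Euc n) ℂ) (m : Euc n) (ξ : Euc n) :
    𝓕 (⇑(LineDeriv.lineDerivOpCLM ℂ (SchwartzMap (Euc n) ℂ) m f)) ξ
      = (2 * Real.pi * Complex.I * (⟪ξ, m⟫ : ℝ)) * 𝓕 (⇑f) ξ := by
  have hfd : Integrable (fderiv ℝ ⇑f) := by
    have h : ⇑(SchwartzMap.fderivCLM ℝ (Euc n) ℂ f) = fderiv ℝ ⇑f := by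
      ext1 x; exact SchwartzMap.fderivCLM_apply ℝ f x
    rw [← h]; exact (SchwartzMap.fderivCLM ℝ (Euc n) ℂ f).integrable
  have key := Real.fourier_fderiv f.integrable f.differentiable hfd
  have h1 : ⇑(LineDeriv.lineDerivOpCLM ℂ (SchwartzMap (Euc n) ℂ) m f) = fun x => fderiv ℝ ⇑f x m := by
    ext1 x; exact SchwartzMap.lineDerivOp_apply_eq_fderiv m f x
  rw [h1, ← Real.fourier_continuousLinearMap_apply hfd, key]
  simp only [VectorFourier.fourierSMulRight_apply, ContinuousLinearMap.neg_apply,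
    innerSL_apply_apply ℝ, real_inner_comm ξ m]
  simp [smul_eq_mul]
  ring

lemma fourier_pderiv_iter (f : SchwartzMap (Euc n) ℂ) (i : Fin n) (kk : ℕ) (ξ : Euc n) :
    𝓕 (⇑((fun g => LineDeriv.lineDerivOpCLM ℂ (SchwartzMap (Euc n) ℂ) (EuclideanSpace.single i (1 : ℝ)) g)^[kk] f)) ξ
      = (2 * Real.pi * Complex.I * (ξ i)) ^ kk * 𝓕 (⇑f) ξ := by
  induction kk with
  | zero => simp
  | succ kk ih =>
    rw [Function.iterate_succ_apply', fourier_pderiv, ih]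
    have : (⟪ξ, EuclideanSpace.single i (1 : ℝ)⟫ : ℝ) = ξ i := by
      simp [EuclideanSpace.inner_single_right]
    rw [this, pow_succ]
    ring

lemma fourier_Dpow (α : Fin n → ℕ) (f : SchwartzMap (Euc n) ℂ) (ξ : Euc n) :
    𝓕 (⇑(Dpow α f)) ξ
      = (∏ i, (2 * Real.pi * Complex.I * (ξ i)) ^ (α i)) * 𝓕 (⇑f) ξ := by
  unfold Dpow
  rw [Fin.prod_univ_def]
  induction List.finRange n with
  | nil => simp
  | cons i l ih =>
    rw [List.foldr_cons, fourier_pderiv_iter, ih, List.map_cons, List.prod_cons]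
    ring

lemma monomial_fourier (α : Fin n → ℕ) (f : SchwartzMap (Euc n) ℂ) (x : Euc n) :
    ((∏ i, x i ^ α i : ℝ) : ℂ) * 𝓕 (⇑f) x
      = ((2 * Real.pi * Complex.I) ^ (∑ i, α i))⁻¹ * 𝓕 (⇑(Dpow α f)) x := by
  have hc : (2 * (Real.pi : ℂ) * Complex.I) ^ (∑ i, α i) ≠ 0 := by
    apply pow_ne_zero
    simp [Complex.ext_iff, Real.pi_ne_zero]
  rw [fourier_Dpow]
  rw [eq_inv_mul_iff_mul_eq₀ hc, ← mul_assoc]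
  congr 1
  push_cast
  rw [← Finset.prod_pow_eq_pow_sum, ← Finset.prod_mul_distrib]
  congr 1
  ext i
  ring

lemma step_a (γc Vs : SchwartzMap (Euc n) ℂ) (x : Euc n) :
    ∫ y : Euc n, 𝓕 (⇑γc) (x - y) * 𝓕 (⇑Vs) y = 𝓕 (fun t => γc t * Vs t) x := by
  have h𝓕 : Integrable (𝓕 ⇑γc) := by
    have : 𝓕 ⇑γc = ⇑(SchwartzMap.fourierTransformCLM ℂ γc) := rfl
    rw [this]; exact (SchwartzMap.fourierTransformCLM ℂ γc).integrable
  have hg : Integrable (fun y : Euc n => 𝓕 (⇑γc) (x - y)) := by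
    simpa [sub_eq_add_neg] using (h𝓕.comp_add_left x).comp_neg
  have h := mul_flip Vs.integrable hg
  calc ∫ y : Euc n, 𝓕 (⇑γc) (x - y) * 𝓕 (⇑Vs) y
      = ∫ y : Euc n, 𝓕 (⇑Vs) y * 𝓕 (⇑γc) (x - y) := by simp_rw [mul_comm]
    _ = ∫ t : Euc n, Vs t * 𝓕 (fun y => 𝓕 (⇑γc) (x - y)) t := h
    _ = ∫ t : Euc n, (Real.fourierChar (-⟪t, x⟫) : ℂ) • (γc t * Vs t) := by
        congr 1; ext t
        rw [fourier_sub_left _ h𝓕 x t, schwartz_inv, smul_eq_mul, real_inner_comm t x]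
        ring
    _ = 𝓕 (fun t => γc t * Vs t) x := (Real.fourier_eq _ _).symm

lemma step_c (γc Us Vs : SchwartzMap (Euc n) ℂ) :
    ∫ x : Euc n, (starRingEnd ℂ) (𝓕 (⇑Us) x) * 𝓕 (fun t => γc t * Vs t) x
      = ∫ t : Euc n, γc t * (starRingEnd ℂ) (Us t) * Vs t := by
  have hGv : Integrable (fun t : Euc n => γc t * Vs t) := by
    apply Vs.integrable.bdd_mul γc.continuous.aestronglyMeasurable
    exact Filter.Eventually.of_forall
      fun t => γc.toBoundedContinuousFunction.norm_coe_le_norm t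
  have hU𝓕 : Integrable (𝓕 ⇑Us) := by
    have : 𝓕 ⇑Us = ⇑(SchwartzMap.fourierTransformCLM ℂ Us) := rfl
    rw [this]; exact (SchwartzMap.fourierTransformCLM ℂ Us).integrable
  have hconj : Integrable (fun x : Euc n => (starRingEnd ℂ) (𝓕 (⇑Us) x)) := by
    refine hU𝓕.norm.mono' (Complex.continuous_conj.comp_aestronglyMeasurable hU𝓕.1) ?_
    exact Filter.Eventually.of_forall fun x => by simp
  have h := mul_flip hGv hconj
  calc ∫ x : Euc n, (starRingEnd ℂ) (𝓕 (⇑Us) x) * 𝓕 (fun t => γc t * Vs t) x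
      = ∫ x : Euc n, 𝓕 (fun t => γc t * Vs t) x * (starRingEnd ℂ) (𝓕 (⇑Us) x) := by
        simp_rw [mul_comm]
    _ = ∫ t : Euc n, (γc t * Vs t) * 𝓕 (fun x => (starRingEnd ℂ) (𝓕 (⇑Us) x)) t := h
    _ = ∫ t : Euc n, γc t * (starRingEnd ℂ) (Us t) * Vs t := by
        congr 1; ext t
        rw [fourier_conj, schwartz_inv]
        ring

/-- Multiplication by the monomial `xᵅ` on the Fourier side is conjugated into
the differential operator `Dᵅ`: for a nonnegative Schwartz `γ` with `k = 𝓕 γ`,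
`∫∫ xᵅ conj(𝓕u(x)) k(x-y) yᵅ 𝓕v(y) dy dx = (2π)^{-2|α|} ∫ γ(t) conj(Dᵅu(t)) Dᵅv(t) dt`. -/
theorem stmt_1 (n : ℕ) (hn : 1 ≤ n)
    (γ : SchwartzMap (Euc n) ℝ) (hγ : ∀ x, 0 ≤ γ x)
    (k : Euc n → ℂ) (hk : k = 𝓕 (fun x => (γ x : ℂ)))
    (α : Fin n → ℕ) (u v : SchwartzMap (Euc n) ℂ) :
    ∫ x : Euc n, ∫ y : Euc n,
        ((∏ i, x i ^ α i : ℝ) : ℂ) * (starRingEnd ℂ) (𝓕 (⇑u) x) * k (x - y) *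
          ((∏ i, y i ^ α i : ℝ) : ℂ) * 𝓕 (⇑v) y
      = ((2 * (Real.pi : ℂ)) ^ (2 * ∑ i, α i))⁻¹ *
          ∫ t : Euc n, (γ t : ℂ) * (starRingEnd ℂ) (Dpow α u t) * Dpow α v t := by
  set A := ∑ i, α i with hA
  set c : ℂ := (2 * Real.pi * Complex.I) ^ A with hc
  set U := Dpow α u with hU
  set V := Dpow α v with hV
  set γc := ofRealS γ with hγc
  have hkc : k = 𝓕 ⇑γc := hk
  set B : Euc n → ℂ := fun x => ((starRingEnd ℂ) c⁻¹ * c⁻¹) * (starRingEnd ℂ) (𝓕 (⇑U) x)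
    with hB
  have hpt : ∀ x y : Euc n,
      ((∏ i, x i ^ α i : ℝ) : ℂ) * (starRingEnd ℂ) (𝓕 (⇑u) x) * k (x - y) *
          ((∏ i, y i ^ α i : ℝ) : ℂ) * 𝓕 (⇑v) y
        = B x * (k (x - y) * 𝓕 (⇑V) y) := by
    intro x y
    have h1 : ((∏ i, x i ^ α i : ℝ) : ℂ) * (starRingEnd ℂ) (𝓕 (⇑u) x)
        = (starRingEnd ℂ) c⁻¹ * (starRingEnd ℂ) (𝓕 (⇑U) x) := by
      rw [← map_mul]
      congr 1
      rw [← monomial_fourier α u x]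
      rw [map_mul, Complex.conj_ofReal]
    have h2 : ((∏ i, y i ^ α i : ℝ) : ℂ) * 𝓕 (⇑v) y = c⁻¹ * 𝓕 (⇑V) y :=
      monomial_fourier α v y
    calc ((∏ i, x i ^ α i : ℝ) : ℂ) * (starRingEnd ℂ) (𝓕 (⇑u) x) * k (x - y) *
          ((∏ i, y i ^ α i : ℝ) : ℂ) * 𝓕 (⇑v) y
        = (((∏ i, x i ^ α i : ℝ) : ℂ) * (starRingEnd ℂ) (𝓕 (⇑u) x)) *
            (((∏ i, y i ^ α i : ℝ) : ℂ) * 𝓕 (⇑v) y) * k (x - y) := by ring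
      _ = ((starRingEnd ℂ) c⁻¹ * (starRingEnd ℂ) (𝓕 (⇑U) x)) * (c⁻¹ * 𝓕 (⇑V) y) *
            k (x - y) := by rw [h1, h2]
      _ = B x * (k (x - y) * 𝓕 (⇑V) y) := by rw [hB]; ring
  have hGv : ∀ x : Euc n, (∫ y : Euc n, k (x - y) * 𝓕 (⇑V) y)
      = 𝓕 (fun t => γc t * V t) x := by
    intro x
    rw [hkc]
    exact step_a γc V x
  calc ∫ x : Euc n, ∫ y : Euc n,
        ((∏ i, x i ^ α i : ℝ) : ℂ) * (starRingEnd ℂ) (𝓕 (⇑u) x) * k (x - y) *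
          ((∏ i, y i ^ α i : ℝ) : ℂ) * 𝓕 (⇑v) y
      = ∫ x : Euc n, B x * 𝓕 (fun t => γc t * V t) x := by
        congr 1; ext x
        simp_rw [hpt x]
        rw [integral_const_mul, hGv x]
    _ = ((starRingEnd ℂ) c⁻¹ * c⁻¹) *
          ∫ x : Euc n, (starRingEnd ℂ) (𝓕 (⇑U) x) * 𝓕 (fun t => γc t * V t) x := by
        simp_rw [hB, mul_assoc]
        rw [integral_const_mul, integral_const_mul]
    _ = ((starRingEnd ℂ) c⁻¹ * c⁻¹) * ∫ t : Euc n, γc t * (starRingEnd ℂ) (U t) * V t := by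
        rw [step_c γc U V]
    _ = ((2 * (Real.pi : ℂ)) ^ (2 * A))⁻¹ *
          ∫ t : Euc n, (γ t : ℂ) * (starRingEnd ℂ) (U t) * V t := by
        congr 1
        rw [map_inv₀, ← mul_inv]
        congr 1
        rw [hc, map_pow, ← mul_pow, pow_mul]
        congr 1
        have h : (starRingEnd ℂ) (2 * (Real.pi : ℂ) * Complex.I)
            = -(2 * (Real.pi : ℂ) * Complex.I) := by
          rw [map_mul, map_mul, Complex.conj_I, Complex.conj_ofReal, map_ofNat]
          ring
        rw [h]
        ring_nf
        rw [Complex.I_sq]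
        ring
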